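/- Let π be a probability density on ℝ^d and let a > 1. Define μ(x) = ∫_{ℝ^d} π(y) N(x; y/a, (1−a^{−2}) I_d) dy, the density of a^{−1}Y + √(1−a^{−2}) Z where Y has density π and Z is an independent standard Gaussian. Then μ is continuously differentiable and, at every x with μ(x) > 0, its score satisfies ∇ log μ(x) = (a^{−1}/(1−a^{−2})) · E_{y ∼ m(·|x)}[y − a x], where m(·|x) is the probability density on ℝ^d proportional to y ↦ π(y) · N(y; a x, (a²−1) I_d). -/

import Mathlib

/-!
Up to its normalising constant the Gaussian density is the kernel
`g_c(m, x) = exp (-‖x - m‖² / (2c))`, so `μ` is a mixture `x ↦ ∫ w y * g_c(m y, x) dy`.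
The derivative `c⁻¹ g_c(m, x) ⟪m - x, ·⟫` of the kernel is bounded by `c⁻¹ √(2c)` uniformly,
since `r e^{-r²/(2c)} ≤ √(2c)`, so differentiation under the integral sign is dominated by a
multiple of `|w|`. This gives `C¹` and `∇ log μ(x) = c⁻¹ (E[m Y] - x)`, the mean taken against
the weight `y ↦ w y * g_c(m y, x)`. For `m y = a⁻¹ y` and `c = 1 - a⁻²` one has
`g_c(a⁻¹ y, x) = g_{a²-1}(a x, y)` and `a⁻¹ y - x = a⁻¹ (y - a x)`; normalising constants cancel
in the weighted mean.
-/

open MeasureTheory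

/-- The multivariate Gaussian density `N(x; μ, Σ)` on `ℝ^d` (Euclidean space version). -/
noncomputable def gaussDensityE {d : ℕ} (μ : EuclideanSpace ℝ (Fin d))
    (S : Matrix (Fin d) (Fin d) ℝ) (x : EuclideanSpace ℝ (Fin d)) : ℝ :=
  (2 * Real.pi) ^ (-(d : ℝ) / 2) * S.det ^ (-(1 : ℝ) / 2) *
    Real.exp (-(dotProduct (fun i => x i - μ i) (S⁻¹.mulVec (fun i => x i - μ i))) / 2)

section GaussKernel

variable {E : Type*} [NormedAddCommGroup E]

noncomputable def gaussKernel (c : ℝ) (m x : E) : ℝ := Real.exp (-‖x - m‖ ^ 2 / (2 * c))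

lemma gaussKernel_pos (c : ℝ) (m x : E) : 0 < gaussKernel c m x :=
  Real.exp_pos _

lemma gaussKernel_le_one {c : ℝ} (hc : 0 ≤ c) (m x : E) : gaussKernel c m x ≤ 1 :=
  Real.exp_le_one_iff.2 (div_nonpos_of_nonpos_of_nonneg (by simp) (by positivity))

lemma le_exp_sq (u : ℝ) : u ≤ Real.exp (u ^ 2) := by
  nlinarith [Real.add_one_le_exp (u ^ 2), sq_nonneg (u - 1 / 2)]

lemma norm_sub_mul_gaussKernel_le {c : ℝ} (hc : 0 < c) (m x : E) :
    ‖x - m‖ * gaussKernel c m x ≤ √(2 * c) := by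
  set s := √(2 * c)
  have hs : 0 < s := by positivity
  have hu : (‖x - m‖ / s) ^ 2 = ‖x - m‖ ^ 2 / (2 * c) := by
    rw [div_pow, Real.sq_sqrt (by positivity)]
  have key : ‖x - m‖ ≤ s * Real.exp (‖x - m‖ ^ 2 / (2 * c)) := by
    rw [← hu, ← div_le_iff₀' hs]
    exact le_exp_sq _
  rw [gaussKernel, neg_div, Real.exp_neg, ← div_eq_mul_inv, div_le_iff₀ (Real.exp_pos _)]
  exact key

lemma gaussKernel_inv_smul [NormedSpace ℝ E] {t : ℝ} (ht : t ≠ 0) (c : ℝ) (x y : E) :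
    gaussKernel c (t⁻¹ • y) x = gaussKernel (t ^ 2 * c) (t • x) y := by
  have hxy : x - t⁻¹ • y = t⁻¹ • (t • x - y) := by
    rw [smul_sub, inv_smul_smul₀ ht]
  have hnorm : ‖x - t⁻¹ • y‖ ^ 2 = ‖y - t • x‖ ^ 2 / t ^ 2 := by
    rw [hxy, norm_smul, norm_sub_rev, mul_pow, norm_inv, Real.norm_eq_abs, inv_pow, sq_abs,
      inv_mul_eq_div]
  rw [gaussKernel, gaussKernel, hnorm]
  congr 1
  field_simp

lemma hasFDerivAt_gaussKernel [InnerProductSpace ℝ E] (c : ℝ) (m x : E) :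
    HasFDerivAt (gaussKernel c m) ((c⁻¹ * gaussKernel c m x) • innerSL ℝ (m - x)) x := by
  have h := (((hasFDerivAt_id x).sub_const m).norm_sq.neg.mul_const (2 * c)⁻¹).exp
  refine (h.congr_of_eventuallyEq (.of_forall fun z => ?_)).congr_fderiv ?_
  · simp [gaussKernel, div_eq_mul_inv]
  ext v
  simp only [id_eq, Pi.neg_apply, mul_inv_rev, neg_mul, map_sub, ContinuousLinearMap.comp_id,
    smul_neg, neg_apply, smul_apply, sub_apply, coe_innerSL_apply, nsmul_eq_mul, Nat.cast_ofNat,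
    smul_eq_mul, gaussKernel, div_eq_mul_inv]
  ring

end GaussKernel

lemma gaussDensityE_smul_one {d : ℕ} {c : ℝ} (hc : 0 < c) (m x : EuclideanSpace ℝ (Fin d)) :
    gaussDensityE m (c • 1) x = (2 * Real.pi * c) ^ (-(d : ℝ) / 2) * gaussKernel c m x := by
  have hdet : (c • (1 : Matrix (Fin d) (Fin d) ℝ)).det ^ (-(1 : ℝ) / 2) = c ^ (-(d : ℝ) / 2) := by
    rw [Matrix.det_smul, Matrix.det_one, mul_one, Fintype.card_fin, ← Real.rpow_natCast,
      ← Real.rpow_mul hc.le]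
    ring_nf
  have hinv : (c • (1 : Matrix (Fin d) (Fin d) ℝ))⁻¹ = c⁻¹ • 1 :=
    Matrix.inv_eq_right_inv (by simp [hc.ne'])
  have hdot : dotProduct (fun i => x i - m i)
      ((c⁻¹ • 1 : Matrix (Fin d) (Fin d) ℝ).mulVec fun i => x i - m i) = ‖x - m‖ ^ 2 / c := by
    rw [Matrix.smul_mulVec, Matrix.one_mulVec, dotProduct_smul, EuclideanSpace.norm_sq_eq]
    simp [dotProduct, sq, div_eq_inv_mul]
  rw [gaussDensityE, hdet, hinv, hdot, gaussKernel,
    Real.mul_rpow (by positivity) hc.le]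
  ring_nf

section WeightedMean

variable {α E : Type*} [MeasurableSpace α] [NormedAddCommGroup E] [NormedSpace ℝ E]

noncomputable def weightedMean (μ : Measure α) (w : α → ℝ) (v : α → E) : E :=
  (∫ y, w y ∂μ)⁻¹ • ∫ y, w y • v y ∂μ

variable {μ : Measure α} {w : α → ℝ} {v : α → E}

lemma weightedMean_const_mul {k : ℝ} (hk : k ≠ 0) :
    weightedMean μ (fun y => k * w y) v = weightedMean μ w v := by
  simp only [weightedMean, mul_smul]
  rw [integral_smul, integral_const_mul, smul_smul, mul_inv_rev, mul_assoc, inv_mul_cancel₀ hk,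
    mul_one]

lemma weightedMean_smul (t : ℝ) :
    weightedMean μ w (fun y => t • v y) = t • weightedMean μ w v := by
  simp only [weightedMean, smul_comm _ t, integral_smul]

end WeightedMean

section GaussianMixture

variable {α E : Type*} [MeasurableSpace α] [NormedAddCommGroup E] [InnerProductSpace ℝ E]
  {μ : Measure α} {w : α → ℝ} {m : α → E} {c : ℝ}

lemma norm_smul_fderiv_gaussKernel_le (hc : 0 < c) (r : ℝ) (m x : E) :
    ‖r • ((c⁻¹ * gaussKernel c m x) • innerSL ℝ (m - x))‖ ≤ ‖r‖ * (c⁻¹ * √(2 * c)) := by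
  rw [norm_smul, norm_smul, innerSL_apply_norm, norm_mul, norm_inv, Real.norm_of_nonneg hc.le,
    Real.norm_of_nonneg (gaussKernel_pos _ _ _).le, mul_assoc, norm_sub_rev,
    mul_comm (gaussKernel _ _ _)]
  gcongr
  exact norm_sub_mul_gaussKernel_le hc m x

lemma aestronglyMeasurable_smul_fderiv_gaussKernel (hw : AEStronglyMeasurable w μ)
    (hm : AEStronglyMeasurable m μ) (x : E) :
    AEStronglyMeasurable (fun y => w y • ((c⁻¹ * gaussKernel c (m y) x) • innerSL ℝ (m y - x))) μ :=
  hw.smul <| (by unfold gaussKernel; fun_prop :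
    Continuous fun m : E => (c⁻¹ * gaussKernel c m x) • innerSL ℝ (m - x))
    |>.comp_aestronglyMeasurable hm

lemma hasFDerivAt_integral_mul_gaussKernel (hw : Integrable w μ) (hm : AEStronglyMeasurable m μ)
    (hc : 0 < c) (x : E) :
    HasFDerivAt (fun x => ∫ y, w y * gaussKernel c (m y) x ∂μ)
      (∫ y, w y • ((c⁻¹ * gaussKernel c (m y) x) • innerSL ℝ (m y - x)) ∂μ) x := by
  have hmeas : ∀ x, AEStronglyMeasurable (fun y => gaussKernel c (m y) x) μ := fun x =>
    (by unfold gaussKernel; fun_prop : Continuous fun m : E => gaussKernel c m x)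
      |>.comp_aestronglyMeasurable hm
  refine hasFDerivAt_integral_of_dominated_of_fderiv_le (s := Set.univ)
    (F := fun x y => w y * gaussKernel c (m y) x)
    (F' := fun x y => w y • ((c⁻¹ * gaussKernel c (m y) x) • innerSL ℝ (m y - x))) Filter.univ_mem
    (.of_forall fun x => hw.1.mul (hmeas x))
    (hw.mul_bdd (c := 1) (hmeas x) (.of_forall fun y => ?_))
    (aestronglyMeasurable_smul_fderiv_gaussKernel hw.1 hm x)
    (.of_forall fun y x _ => norm_smul_fderiv_gaussKernel_le hc _ _ _)
    (hw.norm.mul_const (c⁻¹ * √(2 * c)))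
    (.of_forall fun y x _ => (hasFDerivAt_gaussKernel c (m y) x).const_mul (w y))
  rw [Real.norm_of_nonneg (gaussKernel_pos _ _ _).le]
  exact gaussKernel_le_one hc.le _ _

lemma contDiff_integral_mul_gaussKernel (hw : Integrable w μ) (hm : AEStronglyMeasurable m μ)
    (hc : 0 < c) : ContDiff ℝ 1 (fun x => ∫ y, w y * gaussKernel c (m y) x ∂μ) := by
  have hderiv := hasFDerivAt_integral_mul_gaussKernel hw hm hc
  rw [contDiff_one_iff_fderiv, funext fun x => (hderiv x).fderiv]
  refine ⟨fun x => (hderiv x).differentiableAt, continuous_of_dominated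
    (aestronglyMeasurable_smul_fderiv_gaussKernel hw.1 hm)
    (fun x => .of_forall fun y => norm_smul_fderiv_gaussKernel_le hc _ _ _)
    (hw.norm.mul_const (c⁻¹ * √(2 * c))) (.of_forall fun y => ?_)⟩
  unfold gaussKernel
  fun_prop

open InnerProductSpace in
lemma hasGradientAt_log_integral_mul_gaussKernel [CompleteSpace E] (hw : Integrable w μ)
    (hm : AEStronglyMeasurable m μ) (hc : 0 < c) {x : E}
    (hx : ∫ y, w y * gaussKernel c (m y) x ∂μ ≠ 0) :
    HasGradientAt (fun x => Real.log (∫ y, w y * gaussKernel c (m y) x ∂μ))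
      (c⁻¹ • weightedMean μ (fun y => w y * gaussKernel c (m y) x) (fun y => m y - x)) x := by
  have hdual : ∀ y, w y • ((c⁻¹ * gaussKernel c (m y) x) • innerSL ℝ (m y - x)) =
      (toDual ℝ E).toLinearIsometry (c⁻¹ • (w y * gaussKernel c (m y) x) • (m y - x)) := by
    intro y
    ext v
    simp only [LinearIsometryEquiv.coe_toLinearIsometry, FunLike.coe_smul,
      Pi.smul_apply, innerSL_apply_apply, toDual_apply_apply, real_inner_smul_left, smul_eq_mul]
    ring
  have hderiv := (hasFDerivAt_integral_mul_gaussKernel hw hm hc x).log hx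
  rw [hasGradientAt_iff_hasFDerivAt]
  simp only [hdual, LinearIsometry.integral_comp_comm, integral_smul] at hderiv
  rwa [weightedMean, smul_comm c⁻¹, map_smulₛₗ, starRingEnd_apply, star_trivial]

end GaussianMixture

theorem monte_carlo_score_identity_general
    {d : ℕ} (π : EuclideanSpace ℝ (Fin d) → ℝ)
    (hint : ∫ y, π y = 1)
    (a : ℝ) (ha : 1 < a) :
    ContDiff ℝ 1 (fun x : EuclideanSpace ℝ (Fin d) =>
        ∫ y, π y * gaussDensityE (a⁻¹ • y) ((1 - (a ^ 2)⁻¹) • 1) x) ∧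
    ∀ x : EuclideanSpace ℝ (Fin d),
      0 < (∫ y, π y * gaussDensityE (a⁻¹ • y) ((1 - (a ^ 2)⁻¹) • 1) x) →
      gradient (fun z => Real.log
          (∫ y, π y * gaussDensityE (a⁻¹ • y) ((1 - (a ^ 2)⁻¹) • 1) z)) x =
        (a⁻¹ / (1 - (a ^ 2)⁻¹)) •
          ((∫ y, π y * gaussDensityE (a • x) ((a ^ 2 - 1) • 1) y)⁻¹ •
            ∫ y, (π y * gaussDensityE (a • x) ((a ^ 2 - 1) • 1) y) • (y - a • x)) := by
  have ha0 : a ≠ 0 := by positivity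
  have hc : 0 < 1 - (a ^ 2)⁻¹ := sub_pos.2 (inv_lt_one_of_one_lt₀ (one_lt_pow₀ ha two_ne_zero))
  have hc' : 0 < a ^ 2 - 1 := sub_pos.2 (one_lt_pow₀ ha two_ne_zero)
  have hπ : Integrable π := .of_integral_ne_zero (by simp [hint])
  have hm : AEStronglyMeasurable (fun y : EuclideanSpace ℝ (Fin d) => a⁻¹ • y) :=
    (continuous_const_smul _).aestronglyMeasurable
  set K := (2 * Real.pi * (1 - (a ^ 2)⁻¹)) ^ (-(d : ℝ) / 2)
  have hK : 0 < K := by positivity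
  have hmix : ∀ x, ∫ y, π y * gaussDensityE (a⁻¹ • y) ((1 - (a ^ 2)⁻¹) • 1) x =
      ∫ y, K * π y * gaussKernel (1 - (a ^ 2)⁻¹) (a⁻¹ • y) x := fun x => by
    congr with y
    rw [gaussDensityE_smul_one hc]
    ring
  simp only [hmix]
  refine ⟨contDiff_integral_mul_gaussKernel (hπ.const_mul K) hm hc, fun x hx => ?_⟩
  rw [(hasGradientAt_log_integral_mul_gaussKernel (hπ.const_mul K) hm hc hx.ne').gradient]
  set G := fun y => π y * gaussKernel (a ^ 2 - 1) (a • x) y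
  have hprior :
      (fun y => K * π y * gaussKernel (1 - (a ^ 2)⁻¹) (a⁻¹ • y) x) = fun y => K * G y := by
    ext y
    rw [gaussKernel_inv_smul ha0, mul_sub, mul_one, mul_inv_cancel₀ (pow_ne_zero 2 ha0), mul_assoc]
  have hposterior : (fun y => π y * gaussDensityE (a • x) ((a ^ 2 - 1) • 1) y) =
      fun y => (2 * Real.pi * (a ^ 2 - 1)) ^ (-(d : ℝ) / 2) * G y := by
    ext y
    rw [gaussDensityE_smul_one hc', mul_left_comm]
  have hshift : (fun y => a⁻¹ • y - x) = fun y => a⁻¹ • (y - a • x) := by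
    ext y
    rw [smul_sub, inv_smul_smul₀ ha0]
  change _ = _ • weightedMean volume (fun y => π y * gaussDensityE (a • x) ((a ^ 2 - 1) • 1) y)
    (fun y => y - a • x)
  rw [hprior, hposterior, hshift, weightedMean_const_mul hK.ne',
    weightedMean_const_mul (by positivity), weightedMean_smul, smul_smul, div_eq_inv_mul]

/-- Monte Carlo score identity: for a probability density `π` on `ℝ^d` and `a > 1`, the density
`μ(x) = ∫ π(y) N(x; y/a, (1-a⁻²)I) dy` of `a⁻¹Y + √(1-a⁻²)Z` is `C¹`, and wherever `μ(x) > 0`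
its score is `∇ log μ(x) = (a⁻¹/(1-a⁻²)) E_{y ∼ m(·|x)}[y - a x]`, where `m(·|x)` is the
probability density proportional to `y ↦ π(y) N(y; a x, (a²-1)I)`. -/
theorem monte_carlo_score_identity
    {d : ℕ} (π : EuclideanSpace ℝ (Fin d) → ℝ)
    (hmeas : Measurable π) (hnn : ∀ y, 0 ≤ π y) (hint : ∫ y, π y = 1)
    (a : ℝ) (ha : 1 < a) :
    ContDiff ℝ 1 (fun x : EuclideanSpace ℝ (Fin d) =>
        ∫ y, π y * gaussDensityE (a⁻¹ • y) ((1 - (a ^ 2)⁻¹) • 1) x) ∧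
    ∀ x : EuclideanSpace ℝ (Fin d),
      0 < (∫ y, π y * gaussDensityE (a⁻¹ • y) ((1 - (a ^ 2)⁻¹) • 1) x) →
      gradient (fun z => Real.log
          (∫ y, π y * gaussDensityE (a⁻¹ • y) ((1 - (a ^ 2)⁻¹) • 1) z)) x =
        (a⁻¹ / (1 - (a ^ 2)⁻¹)) •
          ((∫ y, π y * gaussDensityE (a • x) ((a ^ 2 - 1) • 1) y)⁻¹ •
            ∫ y, (π y * gaussDensityE (a • x) ((a ^ 2 - 1) • 1) y) • (y - a • x)) :=
  monte_carlo_score_identity_general π hint a ha
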